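/- Every point (t,x) with t ∈ [0,T) and x > K belongs to the continuation set, i.e. V(t,x) > G(t,x) = 0. -/

import Mathlib

open MeasureTheory ProbabilityTheory Real Set Filter

noncomputable section

/-- Geometric Brownian motion with parameters `r`, `σ`, started at `x`,
driven by the process `W`: `X^x_t = x · exp((r - σ²/2)t + σ W_t)`. -/
def GBM {Ω : Type} (r σ x : ℝ) (W : ℝ → Ω → ℝ) (t : ℝ) (ω : Ω) : ℝ :=
  x * Real.exp ((r - σ ^ 2 / 2) * t + σ * W t ω)

/-- `W` is a standard Brownian motion with respect to the filtration `F` under the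
probability measure `P`: it starts at `0`, has continuous paths, is adapted to `F`,
has Gaussian increments `W t - W s ∼ N(0, t - s)`, and its increments after time `s`
are independent of `F s`. -/
structure IsStdBM {Ω : Type} [mΩ : MeasurableSpace Ω] (P : Measure Ω)
    (F : Filtration ℝ mΩ) (W : ℝ → Ω → ℝ) : Prop where
  init : ∀ ω, W 0 ω = 0
  cont : ∀ ω, Continuous fun t => W t ω
  adapted : ∀ t : ℝ, Measurable[F t] (W t)
  incr_law : ∀ s t : ℝ, 0 ≤ s → s ≤ t →
      Measure.map (fun ω => W t ω - W s ω) P = gaussianReal 0 (Real.toNNReal (t - s))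
  incr_indep : ∀ s t : ℝ, 0 ≤ s → s ≤ t →
      Indep (MeasurableSpace.comap (fun ω => W t ω - W s ω) Real.measurableSpace) (F s) P

/-- The standard normal cumulative distribution function `Φ`. -/
def stdCDF (y : ℝ) : ℝ := ∫ z in Iic y, Real.exp (-z ^ 2 / 2) / Real.sqrt (2 * π)

/-- The finite-horizon Azéma supermartingale function `Z(t,x)` (with `α = 2r/σ² - 1`):
for `t < T`, `Z(t,x) = min{Φ(d₁) + (L/x)^α Φ(d₂), 1}`, and at `t = T` it is `1` for
`x ≥ L` and `0` for `x < L`. -/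
def Zt (r σ L T t x : ℝ) : ℝ :=
  if t < T then
    min (stdCDF ((-Real.log (L / x) + (r - σ ^ 2 / 2) * (T - t)) / (σ * Real.sqrt (T - t))) +
        (L / x) ^ (2 * r / σ ^ 2 - 1) *
          stdCDF ((-Real.log (L / x) - (r - σ ^ 2 / 2) * (T - t)) / (σ * Real.sqrt (T - t)))) 1
  else if L ≤ x then 1 else 0

/-- The finite-horizon gain function `G(t,x) = (K - x)⁺ · Z(t,x)`. -/
def gainT (r σ L K T t x : ℝ) : ℝ := max (K - x) 0 * Zt r σ L T t x

/-- The finite-horizon value function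
`V(t,x) = sup_{0 ≤ τ ≤ T - t} E[e^{-rτ} G(t + τ, X^x_τ)]`, the supremum being taken
over all `F`-stopping times `τ` with `0 ≤ τ ≤ T - t` almost surely. -/
def valueT {Ω : Type} [mΩ : MeasurableSpace Ω] (P : Measure Ω) (F : Filtration ℝ mΩ)
    (W : ℝ → Ω → ℝ) (r σ L K T t x : ℝ) : ℝ :=
  ⨆ τ : {τ : Ω → ℝ // IsStoppingTime F (fun ω => (τ ω : WithTop ℝ)) ∧ ∀ᵐ ω ∂P, τ ω ∈ Icc 0 (T - t)},
    ∫ ω, Real.exp (-r * τ.1 ω) * gainT r σ L K T (t + τ.1 ω) (GBM r σ x W (τ.1 ω) ω) ∂P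

/-!
Stop deterministically at the horizon, i.e. use `τ = T - t`. The terminal gain
`(K - y)⁺ 1{y ≥ L}` is positive on `(L, K)`, and `X^x_{T-t}` falls in `(L, K)` with positive
probability because the Gaussian law of `W_{T-t}` charges every nonempty open set. Hence
`V(t,x) ≥ e^{-r(T-t)} E[G(T, X^x_{T-t})] > 0`, while `G(t,x) = 0` since `x > K`.
-/

section Gain

variable {r σ L K T t x : ℝ}

lemma stdCDF_nonneg (y : ℝ) : 0 ≤ stdCDF y :=
  setIntegral_nonneg measurableSet_Iic fun _ _ => by positivity

lemma Zt_nonneg (hL : 0 ≤ L) (hx : 0 < x) : 0 ≤ Zt r σ L T t x := by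
  unfold Zt
  split_ifs
  · exact le_min (add_nonneg (stdCDF_nonneg _)
      (mul_nonneg (rpow_nonneg (div_nonneg hL hx.le) _) (stdCDF_nonneg _))) zero_le_one
  · exact zero_le_one
  · exact le_rfl

lemma Zt_le_one : Zt r σ L T t x ≤ 1 := by
  unfold Zt
  split_ifs
  · exact min_le_right _ _
  · exact le_rfl
  · exact zero_le_one

lemma Zt_self : Zt r σ L T T x = if L ≤ x then 1 else 0 := by
  rw [Zt, if_neg (lt_irrefl T)]

lemma gainT_nonneg (hL : 0 ≤ L) (hx : 0 < x) : 0 ≤ gainT r σ L K T t x :=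
  mul_nonneg (le_max_right _ _) (Zt_nonneg hL hx)

lemma gainT_le (hK : 0 ≤ K) (hx : 0 ≤ x) : gainT r σ L K T t x ≤ K :=
  calc gainT r σ L K T t x ≤ max (K - x) 0 * 1 :=
        mul_le_mul_of_nonneg_left Zt_le_one (le_max_right _ _)
    _ ≤ K := by rw [mul_one]; exact max_le (by linarith) hK

lemma gainT_eq_zero_of_le (hKx : K ≤ x) : gainT r σ L K T t x = 0 := by
  rw [gainT, max_eq_right (by linarith), zero_mul]

lemma gainT_self_pos (hx : x ∈ Ioo L K) : 0 < gainT r σ L K T T x := by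
  rw [gainT, Zt_self, if_pos hx.1.le, mul_one]
  exact lt_max_of_lt_left (sub_pos.2 hx.2)

lemma measurable_gainT_self : Measurable (gainT r σ L K T T) := by
  change Measurable fun y => gainT r σ L K T T y
  simp only [gainT, Zt_self]
  exact ((measurable_const.sub measurable_id).max measurable_const).mul
    (Measurable.ite (measurableSet_le measurable_const measurable_id)
      measurable_const measurable_const)

lemma GBM_pos {Ω : Type} (hx : 0 < x) (r σ : ℝ) (W : ℝ → Ω → ℝ) (s : ℝ) (ω : Ω) :
    0 < GBM r σ x W s ω :=
  mul_pos hx (exp_pos _)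

end Gain

section Brownian

variable {Ω : Type} [MeasurableSpace Ω] {P : Measure Ω} {F : Filtration ℝ ‹_›} {W : ℝ → Ω → ℝ}

lemma IsStdBM.measurable (hW : IsStdBM P F W) (s : ℝ) : Measurable (W s) :=
  (hW.adapted s).mono (F.le s) le_rfl

lemma IsStdBM.map_eq_gaussianReal (hW : IsStdBM P F W) {s : ℝ} (hs : 0 ≤ s) :
    P.map (W s) = gaussianReal 0 s.toNNReal := by
  have h := hW.incr_law 0 s le_rfl hs
  simp only [hW.init, sub_zero] at h
  exact h

lemma IsStdBM.measure_preimage_pos (hW : IsStdBM P F W) {s : ℝ} (hs : 0 < s) {U : Set ℝ}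
    (hU : IsOpen U) (hne : U.Nonempty) : 0 < P (W s ⁻¹' U) := by
  rw [← Measure.map_apply (hW.measurable s) hU.measurableSet, hW.map_eq_gaussianReal hs.le]
  refine pos_iff_ne_zero.2 fun h0 => (hU.measure_pos volume hne).ne' ?_
  exact gaussianReal_absolutelyContinuous' 0 (by simpa using hs) h0

lemma measurable_GBM (hW : IsStdBM P F W) (r σ x s : ℝ) : Measurable (GBM r σ x W s) :=
  measurable_const.mul ((measurable_const.add ((hW.measurable s).const_mul σ)).exp)

lemma IsStdBM.measure_GBM_mem_Ioo_pos (hW : IsStdBM P F W) {r σ x s a b : ℝ} (hσ : σ ≠ 0)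
    (hx : 0 < x) (hs : 0 < s) (ha : 0 ≤ a) (hab : a < b) :
    0 < P (GBM r σ x W s ⁻¹' Ioo a b) := by
  set c := (r - σ ^ 2 / 2) * s
  let U := (fun w => x * exp (c + σ * w)) ⁻¹' Ioo a b
  have hU : IsOpen U := isOpen_Ioo.preimage (by fun_prop)
  set m := (a + b) / 2 with hm_def
  have hm : 0 < m / x := div_pos (by rw [hm_def]; linarith) hx
  have hne : U.Nonempty := by
    refine ⟨(log (m / x) - c) / σ, ?_⟩
    have : x * exp (c + σ * ((log (m / x) - c) / σ)) = m := by
      rw [mul_div_cancel₀ _ hσ, add_sub_cancel, exp_log hm, mul_div_cancel₀ _ hx.ne']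
    show x * exp (c + σ * ((log (m / x) - c) / σ)) ∈ Ioo a b
    rw [this, hm_def]
    constructor <;> linarith
  exact hW.measure_preimage_pos hs hU hne

end Brownian

section Value

variable {Ω : Type} [MeasurableSpace Ω] {P : Measure Ω} [IsProbabilityMeasure P]
  {F : Filtration ℝ ‹_›} {W : ℝ → Ω → ℝ} {r σ L K T t x : ℝ}

lemma IsStdBM.integral_gainT_self_GBM_pos (hW : IsStdBM P F W) (hσ : σ ≠ 0) (hL : 0 ≤ L)
    (hLK : L < K) (hx : 0 < x) {s : ℝ} (hs : 0 < s) :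
    0 < ∫ ω, gainT r σ L K T T (GBM r σ x W s ω) ∂P := by
  have hnonneg : ∀ ω, 0 ≤ gainT r σ L K T T (GBM r σ x W s ω) := fun ω =>
    gainT_nonneg hL (GBM_pos hx r σ W s ω)
  have hint : Integrable (fun ω => gainT r σ L K T T (GBM r σ x W s ω)) P := by
    refine Integrable.mono' (integrable_const K)
      (measurable_gainT_self.comp (measurable_GBM hW r σ x s)).aestronglyMeasurable ?_
    exact ae_of_all _ fun ω => by
      rw [norm_of_nonneg (hnonneg ω)]
      exact gainT_le (hL.trans hLK.le) (GBM_pos hx r σ W s ω).le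
  rw [integral_pos_iff_support_of_nonneg hnonneg hint]
  exact (hW.measure_GBM_mem_Ioo_pos (r := r) hσ hx hs hL hLK).trans_le
    (measure_mono fun ω hω => (gainT_self_pos hω).ne')

lemma valueT_bddAbove (hr : 0 ≤ r) (hL : 0 ≤ L) (hK : 0 ≤ K) (hx : 0 < x) :
    BddAbove (range fun τ : {τ : Ω → ℝ // IsStoppingTime F (fun ω => (τ ω : WithTop ℝ)) ∧
        ∀ᵐ ω ∂P, τ ω ∈ Icc 0 (T - t)} =>
      ∫ ω, exp (-r * τ.1 ω) * gainT r σ L K T (t + τ.1 ω) (GBM r σ x W (τ.1 ω) ω) ∂P) := by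
  refine ⟨K, ?_⟩
  rintro _ ⟨τ, rfl⟩
  dsimp only
  have hle : ∀ᵐ ω ∂P,
      exp (-r * τ.1 ω) * gainT r σ L K T (t + τ.1 ω) (GBM r σ x W (τ.1 ω) ω) ≤ K := by
    filter_upwards [τ.2.2] with ω hω
    have hdisc : exp (-r * τ.1 ω) ≤ 1 := exp_le_one_iff.2 (by nlinarith [hω.1])
    calc exp (-r * τ.1 ω) * gainT r σ L K T (t + τ.1 ω) (GBM r σ x W (τ.1 ω) ω)
        ≤ 1 * gainT r σ L K T (t + τ.1 ω) (GBM r σ x W (τ.1 ω) ω) :=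
          mul_le_mul_of_nonneg_right hdisc (gainT_nonneg hL (GBM_pos hx r σ W _ ω))
      _ ≤ K := by rw [one_mul]; exact gainT_le hK (GBM_pos hx r σ W _ ω).le
  by_cases hint : Integrable
      (fun ω => exp (-r * τ.1 ω) * gainT r σ L K T (t + τ.1 ω) (GBM r σ x W (τ.1 ω) ω)) P
  · simpa using integral_mono_ae hint (integrable_const K) hle
  · rw [integral_undef hint]
    exact hK

lemma integral_stop_at_horizon_le_valueT (hr : 0 ≤ r) (hL : 0 ≤ L) (hK : 0 ≤ K) (hx : 0 < x)
    (ht : t ≤ T) :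
    exp (-r * (T - t)) * ∫ ω, gainT r σ L K T T (GBM r σ x W (T - t) ω) ∂P
      ≤ valueT P F W r σ L K T t x := by
  let τ : {τ : Ω → ℝ // IsStoppingTime F (fun ω => (τ ω : WithTop ℝ)) ∧
      ∀ᵐ ω ∂P, τ ω ∈ Icc 0 (T - t)} :=
    ⟨fun _ => T - t, isStoppingTime_const F _, ae_of_all _ fun _ => ⟨sub_nonneg.2 ht, le_rfl⟩⟩
  have hτ := le_ciSup (valueT_bddAbove (σ := σ) (T := T) (W := W) (F := F) hr hL hK hx) τ
  unfold valueT
  simpa only [τ, add_sub_cancel, integral_const_mul] using hτ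

end Value

theorem stmt_11_general {Ω : Type} [mΩ : MeasurableSpace Ω] (P : Measure Ω) [IsProbabilityMeasure P]
    (F : Filtration ℝ mΩ) (W : ℝ → Ω → ℝ) (hW : IsStdBM P F W)
    (r σ L K T : ℝ) (hr : 0 < r) (hσ : 0 < σ) (hL : 0 < L) (hLK : L < K) :
    ∀ t ∈ Ico (0 : ℝ) T, ∀ x : ℝ, K < x →
      valueT P F W r σ L K T t x > gainT r σ L K T t x ∧ gainT r σ L K T t x = 0 := by
  intro t ht x hKx
  have hK : 0 < K := hL.trans hLK
  have hx : 0 < x := hK.trans hKx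
  have hG : gainT r σ L K T t x = 0 := gainT_eq_zero_of_le hKx.le
  refine ⟨?_, hG⟩
  rw [hG]
  have hterm := hW.integral_gainT_self_GBM_pos (r := r) (T := T) hσ.ne' hL.le hLK hx
    (sub_pos.2 ht.2)
  exact (mul_pos (exp_pos _) hterm).trans_le
    (integral_stop_at_horizon_le_valueT hr.le hL.le hK.le hx ht.2.le)

/-- Every point `(t,x)` with `t ∈ [0,T)` and `x > K` belongs to the
continuation set, i.e. `V(t,x) > G(t,x) = 0`. -/
theorem stmt_11 {Ω : Type} [mΩ : MeasurableSpace Ω] (P : Measure Ω) [IsProbabilityMeasure P]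
    (F : Filtration ℝ mΩ) (W : ℝ → Ω → ℝ) (hW : IsStdBM P F W)
    (r σ L K T : ℝ) (hr : 0 < r) (hσ : 0 < σ) (hL : 0 < L) (hLK : L < K) (hT : 0 < T) :
    ∀ t ∈ Ico (0 : ℝ) T, ∀ x : ℝ, K < x →
      valueT P F W r σ L K T t x > gainT r σ L K T t x ∧ gainT r σ L K T t x = 0 :=
  stmt_11_general (mΩ := mΩ) P F W hW r σ L K T hr hσ hL hLK

end
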